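/- Let n ≥ 2 be an integer, α ∈ [0,1), c̃ > 0, λ := arccosh((1 + c̃⁻¹)/(1 − α)), and let B be the (n−1)×(n−1) tridiagonal matrix with diagonal entries 1 + c̃⁻¹ and off-diagonal entries −(1−α)/2. For 1 ≤ i, j ≤ n define D_{ij} := ((1−α)/2)·(B⁻¹_{(i−1)j} + B⁻¹_{i(j−1)} − B⁻¹_{ij} − B⁻¹_{(i−1)(j−1)}), where any entry of B⁻¹ whose row or column index equals 0 or n is taken to be 0. Then D_{ij} = −[i = j] + 2·D̃_{ij}·tanh(λ/2)/sinh(nλ), where D̃_{ij} := cosh((min(i,j) − 1/2)λ)·cosh((n − max(i,j) + 1/2)λ) and [i = j] equals 1 if i = j and 0 otherwise. -/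

import Mathlib

open Real Matrix Finset

noncomputable section

/-- Real inverse hyperbolic cosine. -/
def arcosh (x : ℝ) : ℝ := Real.log (x + Real.sqrt (x ^ 2 - 1))

/-- The regularized reduced kernel matrix: tridiagonal with diagonal `1 + c̃⁻¹`
and off-diagonal `−(1−α)/2`. -/
def Bmat (n : ℕ) (α ctil : ℝ) : Matrix (Fin (n - 1)) (Fin (n - 1)) ℝ :=
  fun i j =>
    if i = j then 1 + ctil⁻¹
    else if (i : ℕ) + 1 = (j : ℕ) ∨ (j : ℕ) + 1 = (i : ℕ) then -((1 - α) / 2)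
    else 0

/-- Entry `(i, j)` of `B⁻¹` in 1-based indexing, taken to be `0` when the row or
column index is `0` or `n` (i.e. outside `1,…,n−1`). -/
def BinvAt (n : ℕ) (α ctil : ℝ) (i j : ℕ) : ℝ :=
  if h : 1 ≤ i ∧ i ≤ n - 1 ∧ 1 ≤ j ∧ j ≤ n - 1 then
    (Bmat n α ctil)⁻¹ ⟨i - 1, by omega⟩ ⟨j - 1, by omega⟩
  else 0

/-- `Dᵢⱼ := ((1−α)/2)(B⁻¹₍ᵢ₋₁₎ⱼ + B⁻¹ᵢ₍ⱼ₋₁₎ − B⁻¹ᵢⱼ − B⁻¹₍ᵢ₋₁₎₍ⱼ₋₁₎)`. -/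
def Dmat (n : ℕ) (α ctil : ℝ) (i j : ℕ) : ℝ :=
  ((1 - α) / 2) *
    (BinvAt n α ctil (i - 1) j + BinvAt n α ctil i (j - 1) -
      BinvAt n α ctil i j - BinvAt n α ctil (i - 1) (j - 1))

/-- `D̃ᵢⱼ = cosh((min(i,j) − 1/2)λ)·cosh((n − max(i,j) + 1/2)λ)`. -/
def Dtil (n : ℕ) (l : ℝ) (i j : ℕ) : ℝ :=
  Real.cosh (((min i j : ℕ) - (1 : ℝ) / 2) * l) *
    Real.cosh (((n : ℝ) - (max i j : ℕ) + 1 / 2) * l)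

/-!
Write `b = (1 - α) / 2` and `cosh λ = (1 + c̃⁻¹) / (1 - α)`. Then `B` is `b` times the discrete
operator `u ↦ 2 cosh λ · u_p - u_{p-1} - u_{p+1}` with Dirichlet conditions at `0` and `n`. Its
Green's function is `sinh (min p q · λ) · sinh ((n - max p q) λ) / (sinh λ · sinh nλ)`: both factors
solve the homogeneous recurrence, each vanishes at one end, and their Wronskian `sinh λ · sinh nλ`
produces the unit jump on the diagonal. Hence `B⁻¹ = green / b`, zero boundary values included,
and `D` is a mixed second difference of the Green's function. The identity
`sinh (kλ) - sinh ((k - 1)λ) = 2 sinh (λ/2) cosh ((k - 1/2)λ)` factors it into `D̃`, and on the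
diagonal the Wronskian contributes the extra `-1`.
-/

lemma sinh_add_sub_sinh_sub (x h : ℝ) : sinh (x + h) - sinh (x - h) = 2 * cosh x * sinh h := by
  rw [sinh_add, sinh_sub]; ring

lemma sinh_sub_add_sinh_add (x h : ℝ) : sinh (x - h) + sinh (x + h) = 2 * cosh h * sinh x := by
  rw [sinh_add, sinh_sub]; ring

lemma sinh_add_mul_sinh_sub_sinh_mul_sinh_sub (a b c : ℝ) :
    sinh (a + c) * sinh b - sinh a * sinh (b - c) = sinh c * sinh (a + b) := by
  rw [sinh_add, sinh_sub, sinh_add]; ring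

lemma sinh_succ_sub_sinh (x l : ℝ) :
    sinh ((x + 1) * l) - sinh (x * l) = 2 * cosh ((x + 1 / 2) * l) * sinh (l / 2) := by
  rw [← sinh_add_sub_sinh_sub]; ring_nf

lemma sinh_step_mul_sinh_step_div (l x y N : ℝ) :
    (sinh ((x + 1) * l) - sinh (x * l)) * (sinh ((N - y) * l) - sinh ((N - (y + 1)) * l)) /
        (sinh l * sinh (N * l)) =
      2 * (cosh ((x + 1 / 2) * l) * cosh ((N - (y + 1) + 1 / 2) * l)) * tanh (l / 2) /
        sinh (N * l) := by
  rcases eq_or_ne l 0 with rfl | hl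
  · simp
  have hs : sinh (l / 2) ≠ 0 := sinh_ne_zero.2 (by simpa using hl)
  have hc : cosh (l / 2) ≠ 0 := (cosh_pos _).ne'
  have hsl : sinh l = 2 * sinh (l / 2) * cosh (l / 2) := by rw [← sinh_two_mul]; ring_nf
  rw [sinh_succ_sub_sinh, show N - y = (N - (y + 1)) + 1 by ring, sinh_succ_sub_sinh,
    ← div_div, hsl, tanh_eq_sinh_div_cosh]
  congr 1
  field_simp

def green (n : ℕ) (l : ℝ) (p q : ℕ) : ℝ :=
  sinh ((min p q : ℕ) * l) * sinh ((n - (max p q : ℕ)) * l) / (sinh l * sinh (n * l))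

section green

variable {n : ℕ} {l : ℝ}

lemma green_comm (p q : ℕ) : green n l p q = green n l q p := by
  simp only [green, min_comm, max_comm]

lemma green_of_le {p q : ℕ} (h : p ≤ q) :
    green n l p q = sinh (p * l) * sinh ((n - q) * l) / (sinh l * sinh (n * l)) := by
  rw [green, min_eq_left h, max_eq_right h]

lemma green_eq_zero {p q : ℕ} (hp : p ≤ n) (hq : q ≤ n) (h : p = 0 ∨ p = n ∨ q = 0 ∨ q = n) :
    green n l p q = 0 := by
  rcases h with rfl | rfl | rfl | rfl <;> simp [green, hp, hq]

lemma green_recurrence (hl : l ≠ 0) (hn : n ≠ 0) (p q : ℕ) :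
    2 * cosh l * green n l (p + 1) q - green n l p q - green n l (p + 2) q =
      if p + 1 = q then 1 else 0 := by
  have hW : sinh l * sinh (n * l) ≠ 0 := by simp [hl, hn]
  have hu := sinh_sub_add_sinh_add ((p + 1) * l) l
  rw [show ((p : ℝ) + 1) * l - l = p * l by ring,
    show ((p : ℝ) + 1) * l + l = (p + 2) * l by ring] at hu
  rcases lt_trichotomy (p + 1) q with h | rfl | h
  · rw [green_of_le h.le, green_of_le (by omega), green_of_le (by omega : p + 2 ≤ q), if_neg h.ne,
      mul_div_assoc', div_sub_div_same, div_sub_div_same, div_eq_zero_iff]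
    left
    push_cast
    linear_combination (-sinh ((n - q) * l)) * hu
  · rw [green_of_le le_rfl, green_of_le (by omega), green_comm, green_of_le (by omega), if_pos rfl,
      mul_div_assoc', div_sub_div_same, div_sub_div_same, div_eq_one_iff_eq hW]
    have wronskian := sinh_add_mul_sinh_sub_sinh_mul_sinh_sub ((p + 1) * l) ((n - (p + 1)) * l) l
    rw [show ((p : ℝ) + 1) * l + l = (p + 2) * l by ring,
      show ((n : ℝ) - (p + 1)) * l - l = (n - (p + 2)) * l by ring,
      show ((p : ℝ) + 1) * l + (n - (p + 1)) * l = n * l by ring] at wronskian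
    push_cast
    linear_combination (-sinh ((n - (p + 1)) * l)) * hu + wronskian
  · rw [green_comm, green_of_le (by omega), green_comm, green_of_le (by omega), green_comm,
      green_of_le (by omega), if_neg h.ne', mul_div_assoc', div_sub_div_same, div_sub_div_same,
      div_eq_zero_iff]
    left
    have hv := sinh_sub_add_sinh_add ((n - (p + 1)) * l) l
    rw [show ((n : ℝ) - (p + 1)) * l - l = (n - (p + 2)) * l by ring,
      show ((n : ℝ) - (p + 1)) * l + l = (n - p) * l by ring] at hv
    push_cast
    linear_combination (-sinh (q * l)) * hv

end green

lemma sum_range_ite_succ_eq {x : ℕ → ℝ} {m k : ℕ} (h0 : x 0 = 0) (hm : x (m + 1) = 0)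
    (hk : k ≤ m + 1) :
    ∑ j ∈ range m, (if j + 1 = k then x (j + 1) else 0) = x k := by
  calc ∑ j ∈ range m, (if j + 1 = k then x (j + 1) else 0)
      = ∑ j ∈ range (m + 2), (if j = k then x j else 0) := by
        rw [Finset.sum_range_succ', Finset.sum_range_succ]
        simp [h0, hm]
    _ = x k := by rw [Finset.sum_ite_eq', if_pos (by simp; omega)]

-- Each condition has the shape `j + 1 = k`, so that `sum_range_ite_succ_eq` evaluates each sum.
lemma Bmat_apply_eq_ite {n : ℕ} {α ctil : ℝ} (i j : Fin (n - 1)) :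
    Bmat n α ctil i j =
      (1 + ctil⁻¹) * (if (j : ℕ) + 1 = i + 1 then 1 else 0) -
        (1 - α) / 2 *
          ((if (j : ℕ) + 1 = i then 1 else 0) + (if (j : ℕ) + 1 = i + 2 then 1 else 0)) := by
  simp only [Bmat, Fin.ext_iff]
  split_ifs <;> first | omega | ring

lemma sum_Bmat_mul {n : ℕ} {α ctil : ℝ} {x : ℕ → ℝ} (h0 : x 0 = 0) (hn : x n = 0)
    (i : Fin (n - 1)) :
    ∑ j, Bmat n α ctil i j * x (j + 1) =
      (1 + ctil⁻¹) * x (i + 1) - (1 - α) / 2 * (x i + x (i + 2)) := by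
  have hm : x (n - 1 + 1) = 0 := by rwa [Nat.sub_add_cancel (by have := i.2; omega)]
  simp only [Bmat_apply_eq_ite, sub_mul, add_mul, mul_assoc, ite_mul, one_mul, zero_mul,
    Finset.sum_sub_distrib, Finset.sum_add_distrib, ← Finset.mul_sum]
  rw [Fin.sum_univ_eq_sum_range (fun j => if j + 1 = i + 1 then x (j + 1) else 0),
    Fin.sum_univ_eq_sum_range (fun j => if j + 1 = i then x (j + 1) else 0),
    Fin.sum_univ_eq_sum_range (fun j => if j + 1 = i + 2 then x (j + 1) else 0),
    sum_range_ite_succ_eq h0 hm (by omega), sum_range_ite_succ_eq h0 hm (by omega),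
    sum_range_ite_succ_eq h0 hm (by omega)]

section inverse

variable {n : ℕ} {α ctil l : ℝ}

lemma Bmat_mul_green (hl : l ≠ 0) (hcosh : 1 + ctil⁻¹ = (1 - α) * cosh l) :
    Bmat n α ctil * Matrix.of (fun p q : Fin (n - 1) => green n l (p + 1) (q + 1)) =
      ((1 - α) / 2) • (1 : Matrix (Fin (n - 1)) (Fin (n - 1)) ℝ) := by
  ext i k
  have hk := k.2
  rw [Matrix.mul_apply]
  simp only [Matrix.of_apply]
  rw [sum_Bmat_mul (x := fun p => green n l p (k + 1))
    (green_eq_zero (by omega) (by omega) (by simp)) (green_eq_zero le_rfl (by omega) (by simp)),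
    Matrix.smul_apply, Matrix.one_apply, hcosh]
  have h := green_recurrence (n := n) hl (by omega) i (k + 1)
  simp only [add_left_inj, ← Fin.ext_iff] at h
  linear_combination ((1 - α) / 2) * h

lemma inv_Bmat (hα : α ≠ 1) (hl : l ≠ 0) (hcosh : 1 + ctil⁻¹ = (1 - α) * cosh l) :
    (Bmat n α ctil)⁻¹ =
      ((1 - α) / 2)⁻¹ • Matrix.of (fun p q : Fin (n - 1) => green n l (p + 1) (q + 1)) := by
  have hb : (1 - α) / 2 ≠ 0 := by
    have : 1 - α ≠ 0 := sub_ne_zero.2 (Ne.symm hα)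
    positivity
  apply Matrix.inv_eq_right_inv
  rw [Matrix.mul_smul, Bmat_mul_green hl hcosh, smul_smul, inv_mul_cancel₀ hb, one_smul]

lemma BinvAt_eq_green (hα : α ≠ 1) (hl : l ≠ 0) (hcosh : 1 + ctil⁻¹ = (1 - α) * cosh l)
    {p q : ℕ} (hp : p ≤ n) (hq : q ≤ n) :
    BinvAt n α ctil p q = green n l p q / ((1 - α) / 2) := by
  rw [BinvAt]
  split_ifs with h
  · rw [inv_Bmat hα hl hcosh, Matrix.smul_apply, Matrix.of_apply, smul_eq_mul, inv_mul_eq_div]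
    simp only [Nat.sub_add_cancel h.1, Nat.sub_add_cancel h.2.2.1]
  · rw [green_eq_zero hp hq (by omega), zero_div]

lemma Dmat_eq_green (hα : α ≠ 1) (hl : l ≠ 0) (hcosh : 1 + ctil⁻¹ = (1 - α) * cosh l)
    {i j : ℕ} (hi : i ≤ n) (hj : j ≤ n) :
    Dmat n α ctil i j =
      green n l (i - 1) j + green n l i (j - 1) - green n l i j - green n l (i - 1) (j - 1) := by
  have hb : 1 - α ≠ 0 := sub_ne_zero.2 (Ne.symm hα)
  rw [Dmat, BinvAt_eq_green hα hl hcosh (by omega) hj, BinvAt_eq_green hα hl hcosh hi (by omega),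
    BinvAt_eq_green hα hl hcosh hi hj, BinvAt_eq_green hα hl hcosh (by omega) (by omega)]
  field_simp

end inverse

lemma Dtil_comm (n : ℕ) (l : ℝ) (i j : ℕ) : Dtil n l i j = Dtil n l j i := by
  simp only [Dtil, min_comm, max_comm]

lemma green_mixed_diff {n : ℕ} {l : ℝ} (hl : l ≠ 0) (hn : n ≠ 0) {i j : ℕ} (hi : 1 ≤ i)
    (hj : 1 ≤ j) :
    green n l (i - 1) j + green n l i (j - 1) - green n l i j - green n l (i - 1) (j - 1) =
      -(if i = j then 1 else 0) + 2 * Dtil n l i j * tanh (l / 2) / sinh (n * l) := by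
  wlog hij : i ≤ j generalizing i j
  · have h := this hj hi (by omega)
    rw [if_neg (by omega)] at h
    rw [if_neg (by omega), Dtil_comm, ← h, green_comm (i - 1), green_comm i (j - 1), green_comm i,
      green_comm (i - 1)]
    ring
  obtain ⟨a, rfl⟩ : ∃ a, i = a + 1 := ⟨i - 1, by omega⟩
  obtain ⟨b, rfl⟩ : ∃ b, j = b + 1 := ⟨j - 1, by omega⟩
  have hstep := sinh_step_mul_sinh_step_div l a b n
  simp only [Nat.add_sub_cancel]
  rw [Dtil, min_eq_left hij, max_eq_right hij]
  push_cast
  rw [show (a : ℝ) + 1 - 1 / 2 = a + 1 / 2 by ring]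
  rcases (Nat.le_of_add_le_add_right hij).lt_or_eq with h | rfl
  · rw [green_of_le (by omega), green_of_le (by omega), green_of_le (by omega), green_of_le h.le,
      if_neg (by omega), ← hstep]
    push_cast
    ring
  · have hW : sinh l * sinh (n * l) ≠ 0 := by simp [hl, hn]
    have h1 : (1 : ℝ) = sinh l * sinh (n * l) / (sinh l * sinh (n * l)) := (div_self hW).symm
    have wronskian := sinh_add_mul_sinh_sub_sinh_mul_sinh_sub (a * l) ((n - a) * l) l
    rw [show (a : ℝ) * l + l = (a + 1) * l by ring,
      show ((n : ℝ) - a) * l - l = (n - (a + 1)) * l by ring,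
      show (a : ℝ) * l + (n - a) * l = n * l by ring] at wronskian
    rw [green_of_le (by omega), green_comm, green_of_le (by omega), green_of_le le_rfl,
      green_of_le le_rfl, if_pos rfl, ← hstep]
    push_cast
    linear_combination h1 - wronskian / (sinh l * sinh (n * l))

lemma arcosh_eq_real_arcosh : _root_.arcosh = Real.arcosh := rfl

theorem Dmat_closed_form_general
    (n : ℕ) (α ctil : ℝ) (hα0 : 0 ≤ α) (hα1 : α < 1) (hc : 0 < ctil) :
    ∀ i j : ℕ, 1 ≤ i → i ≤ n → 1 ≤ j → j ≤ n →
      Dmat n α ctil i j =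
        -(if i = j then (1 : ℝ) else 0) +
          2 * Dtil n (_root_.arcosh ((1 + ctil⁻¹) / (1 - α))) i j *
              Real.tanh (_root_.arcosh ((1 + ctil⁻¹) / (1 - α)) / 2) /
            Real.sinh ((n : ℝ) * _root_.arcosh ((1 + ctil⁻¹) / (1 - α))) := by
  intro i j hi hin hj hjn
  have hx : 1 < (1 + ctil⁻¹) / (1 - α) := by
    rw [one_lt_div (by linarith)]
    linarith [inv_pos.2 hc]
  rw [arcosh_eq_real_arcosh]
  have hl : Real.arcosh ((1 + ctil⁻¹) / (1 - α)) ≠ 0 := (Real.arcosh_pos hx).ne'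
  have hcosh : 1 + ctil⁻¹ = (1 - α) * cosh (Real.arcosh ((1 + ctil⁻¹) / (1 - α))) := by
    rw [Real.cosh_arcosh hx.le]
    field_simp [(by linarith : 1 - α ≠ 0)]
  rw [Dmat_eq_green hα1.ne hl hcosh hin hjn, green_mixed_diff hl (by omega) hi hj]

/-- Closed form of `Dᵢⱼ`: `−[i = j] + 2·D̃ᵢⱼ·tanh(λ/2)/sinh(nλ)`. -/
theorem Dmat_closed_form
    (n : ℕ) (hn : 2 ≤ n) (α ctil : ℝ) (hα0 : 0 ≤ α) (hα1 : α < 1) (hc : 0 < ctil) :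
    ∀ i j : ℕ, 1 ≤ i → i ≤ n → 1 ≤ j → j ≤ n →
      Dmat n α ctil i j =
        -(if i = j then (1 : ℝ) else 0) +
          2 * Dtil n (_root_.arcosh ((1 + ctil⁻¹) / (1 - α))) i j *
              Real.tanh (_root_.arcosh ((1 + ctil⁻¹) / (1 - α)) / 2) /
            Real.sinh ((n : ℝ) * _root_.arcosh ((1 + ctil⁻¹) / (1 - α))) :=
  Dmat_closed_form_general n α ctil hα0 hα1 hc
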